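/- arXiv:2304.04221 — 2 statements merged into one kernel-verified Lean document; each statement's English description precedes it below -/
import Mathlib

section
/- Let X be a p-dimensional random row vector and Y a square-integrable real random variable with positive variance, with Σ_XX positive definite and Σ_XY ≠ 0, γ = √(Σ_YX Σ_XX⁻¹ Σ_XY)/σ_Y, β* = (σ_Y/√(Σ_YX Σ_XX⁻¹ Σ_XY))·Σ_XX⁻¹Σ_XY and α* = μ_Y − μ_X·β*. If α ∈ ℝ and β ∈ ℝ^p satisfy CCC(Y, α + X·β) = γ (i.e., the pair (α,β) achieves the maximal concordance correlation among linear predictors), then α = α* and β = β*; that is, the maximum agreement linear predictor is unique. -/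
open MeasureTheory ProbabilityTheory Matrix

/-!
Put `c = Σ_YX Σ_XX⁻¹ Σ_XY` and `β* = (σ_Y / √c) Σ_XX⁻¹ Σ_XY`. Then `Σ_XX β* = (σ_Y / √c) Σ_XY` and
`β*ᵀ Σ_XX β* = σ_Y²`, so with `d = μ_Y - α - μ_X β` the equation `CCC(Y, α + Xβ) = γ` rearranges to
`(β - β*)ᵀ Σ_XX (β - β*) + d² = 0`. Positive definiteness of `Σ_XX` forces `β = β*` and `d = 0`.
-/

/-- Expectation of a real random variable with respect to the ambient measure. -/
noncomputable def pMean {Ω : Type*} [MeasureSpace Ω] (U : Ω → ℝ) : ℝ := ∫ ω, U ω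

/-- Covariance of two real random variables. -/
noncomputable def pCov {Ω : Type*} [MeasureSpace Ω] (U V : Ω → ℝ) : ℝ :=
  ∫ ω, (U ω - pMean U) * (V ω - pMean V)

/-- Variance of a real random variable. -/
noncomputable def pVar {Ω : Type*} [MeasureSpace Ω] (U : Ω → ℝ) : ℝ := pCov U U

/-- Lin's concordance correlation coefficient. -/
noncomputable def CCC {Ω : Type*} [MeasureSpace Ω] (U V : Ω → ℝ) : ℝ :=
  2 * pCov U V / (pVar U + pVar V + (pMean U - pMean V) ^ 2)

namespace Matrix

variable {n : Type*} [Fintype n]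

lemma dotProduct_mulVec_sub_sub_of_isSymm {R : Type*} [CommRing R] {A : Matrix n n R}
    (hA : A.IsSymm) (x y : n → R) :
    (x - y) ⬝ᵥ A *ᵥ (x - y) = x ⬝ᵥ A *ᵥ x - 2 * (x ⬝ᵥ A *ᵥ y) + y ⬝ᵥ A *ᵥ y := by
  have hyx : y ⬝ᵥ A *ᵥ x = x ⬝ᵥ A *ᵥ y := by
    rw [← dotProduct_transpose_mulVec, hA.eq]
  simp only [mulVec_sub, dotProduct_sub, sub_dotProduct, hyx]
  ring

lemma PosDef.eq_and_eq_zero_of_two_mul_dotProduct_mulVec_eq {A : Matrix n n ℝ} (hA : A.PosDef)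
    {x y : n → ℝ} {d : ℝ}
    (h : 2 * (x ⬝ᵥ A *ᵥ y) = x ⬝ᵥ A *ᵥ x + y ⬝ᵥ A *ᵥ y + d ^ 2) : x = y ∧ d = 0 := by
  have hsum : (x - y) ⬝ᵥ A *ᵥ (x - y) + d ^ 2 = 0 := by
    rw [dotProduct_mulVec_sub_sub_of_isSymm (isHermitian_iff_isSymm.mp hA.isHermitian)]
    linarith
  have hq : 0 ≤ (x - y) ⬝ᵥ A *ᵥ (x - y) := by
    simpa using hA.posSemidef.dotProduct_mulVec_nonneg (x - y)
  have hd : d ^ 2 = 0 := by linarith [sq_nonneg d]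
  refine ⟨sub_eq_zero.mp ?_, pow_eq_zero_iff two_ne_zero |>.mp hd⟩
  by_contra hxy
  have := hA.dotProduct_mulVec_pos hxy
  simp only [star_trivial] at this
  linarith

lemma PosDef.eq_smul_inv_mulVec_of_div_eq [DecidableEq n] {A : Matrix n n ℝ} (hA : A.PosDef)
    {s : n → ℝ} (hs : s ≠ 0) {v : ℝ} (hv : 0 < v) {b : n → ℝ} {d : ℝ}
    (h : 2 * (b ⬝ᵥ s) / (v + b ⬝ᵥ A *ᵥ b + d ^ 2) = √(s ⬝ᵥ A⁻¹ *ᵥ s) / √v) :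
    b = (√v / √(s ⬝ᵥ A⁻¹ *ᵥ s)) • A⁻¹ *ᵥ s ∧ d = 0 := by
  set c := s ⬝ᵥ A⁻¹ *ᵥ s
  have hc : 0 < c := by simpa using hA.inv.dotProduct_mulVec_pos hs
  have hAinv : A *ᵥ A⁻¹ *ᵥ s = s := by
    rw [mulVec_mulVec, mul_nonsing_inv _ ((isUnit_iff_isUnit_det A).mp hA.isUnit), one_mulVec]
  have hq : 0 ≤ b ⬝ᵥ A *ᵥ b := by simpa using hA.posSemidef.dotProduct_mulVec_nonneg b
  refine hA.eq_and_eq_zero_of_two_mul_dotProduct_mulVec_eq ?_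
  rw [mulVec_smul, hAinv, dotProduct_smul, smul_dotProduct, dotProduct_smul,
    dotProduct_comm (A⁻¹ *ᵥ s) s, smul_eq_mul, smul_eq_mul, smul_eq_mul]
  rw [div_eq_div_iff (by positivity) (by positivity)] at h
  have hr := Real.sq_sqrt hc.le
  have hw := Real.sq_sqrt hv.le
  have hr0 := Real.sqrt_pos.mpr hc
  set r := √c
  set w := √v
  field_simp
  linear_combination r * h + w ^ 2 * hr - r ^ 2 * hw

end Matrix

section Moments

variable {Ω : Type*} [MeasureSpace Ω]

lemma pCov_eq_covariance (U V : Ω → ℝ) : pCov U V = cov[U, V; ℙ] := rfl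

lemma pCov_comm (U V : Ω → ℝ) : pCov U V = pCov V U := covariance_comm _ _

variable {ι : Type*} [Fintype ι] {X : Ω → ι → ℝ}

lemma memLp_dotProduct (hX : ∀ j, MemLp (fun ω => X ω j) 2 ℙ) (b : ι → ℝ) :
    MemLp (fun ω => X ω ⬝ᵥ b) 2 ℙ :=
  memLp_finsetSum _ fun j _ => (hX j).mul_const (b j)

variable [IsProbabilityMeasure (ℙ : Measure Ω)]

lemma pMean_const_add_dotProduct (hX : ∀ j, Integrable (fun ω => X ω j)) (a : ℝ) (b : ι → ℝ) :
    pMean (fun ω => a + X ω ⬝ᵥ b) = a + (fun j => pMean fun ω => X ω j) ⬝ᵥ b := by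
  have hterm : ∀ j ∈ Finset.univ, Integrable (fun ω => X ω j * b j) :=
    fun j _ => (hX j).mul_const (b j)
  simp only [pMean, dotProduct]
  rw [integral_add (integrable_const a) (integrable_finsetSum _ hterm), integral_const,
    integral_finsetSum _ hterm]
  simp [integral_mul_const]

lemma pCov_const_add_dotProduct_left (hX : ∀ j, MemLp (fun ω => X ω j) 2 ℙ) {V : Ω → ℝ}
    (hV : MemLp V 2 ℙ) (a : ℝ) (b : ι → ℝ) :
    pCov (fun ω => a + X ω ⬝ᵥ b) V = b ⬝ᵥ fun j => pCov (fun ω => X ω j) V := by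
  rw [pCov_eq_covariance,
    covariance_const_add_left ((memLp_dotProduct hX b).integrable one_le_two)]
  simp only [dotProduct]
  rw [covariance_fun_sum_left (fun j => (hX j).mul_const (b j)) hV]
  simp only [covariance_mul_const_left, mul_comm, pCov_eq_covariance]

lemma pCov_const_add_dotProduct_right (hX : ∀ j, MemLp (fun ω => X ω j) 2 ℙ) {U : Ω → ℝ}
    (hU : MemLp U 2 ℙ) (a : ℝ) (b : ι → ℝ) :
    pCov U (fun ω => a + X ω ⬝ᵥ b) = b ⬝ᵥ fun j => pCov (fun ω => X ω j) U := by
  rw [pCov_comm, pCov_const_add_dotProduct_left hX hU]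

lemma pVar_const_add_dotProduct (hX : ∀ j, MemLp (fun ω => X ω j) 2 ℙ) (a : ℝ) (b : ι → ℝ) :
    pVar (fun ω => a + X ω ⬝ᵥ b) =
      b ⬝ᵥ (Matrix.of fun j l => pCov (fun ω => X ω j) (fun ω => X ω l)) *ᵥ b := by
  have hW : MemLp (fun ω => a + X ω ⬝ᵥ b) 2 ℙ := (memLp_const a).add (memLp_dotProduct hX b)
  rw [pVar, pCov_const_add_dotProduct_left hX hW]
  congr 1
  funext j
  rw [pCov_const_add_dotProduct_right hX (hX j), mulVec, dotProduct_comm]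
  simp only [of_apply, pCov_comm]

end Moments

theorem malp_unique_general {Ω : Type*} [MeasureSpace Ω]
    [IsProbabilityMeasure (ℙ : Measure Ω)] {p : ℕ}
    (X : Ω → Fin p → ℝ) (Y : Ω → ℝ)
    (hX : ∀ j, MemLp (fun ω => X ω j) 2 ℙ) (hY : MemLp Y 2 ℙ)
    (hvar : 0 < pVar Y)
    (μX : Fin p → ℝ) (hμX : μX = fun j => pMean (fun ω => X ω j))
    (μY : ℝ) (hμY : μY = pMean Y)
    (SigXX : Matrix (Fin p) (Fin p) ℝ)
    (hSigXX : SigXX = Matrix.of fun j l => pCov (fun ω => X ω j) (fun ω => X ω l))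
    (hPD : SigXX.PosDef)
    (SigXY : Fin p → ℝ) (hSigXY : SigXY = fun j => pCov (fun ω => X ω j) Y)
    (hne : SigXY ≠ 0)
    (γ : ℝ) (hγ : γ = Real.sqrt (SigXY ⬝ᵥ (SigXX⁻¹ *ᵥ SigXY)) / Real.sqrt (pVar Y))
    (βstar : Fin p → ℝ)
    (hβstar : βstar = (Real.sqrt (pVar Y) / Real.sqrt (SigXY ⬝ᵥ (SigXX⁻¹ *ᵥ SigXY))) •
      (SigXX⁻¹ *ᵥ SigXY))
    (αstar : ℝ) (hαstar : αstar = μY - μX ⬝ᵥ βstar)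
    (α : ℝ) (β : Fin p → ℝ)
    (heq : CCC Y (fun ω => α + X ω ⬝ᵥ β) = γ) :
    α = αstar ∧ β = βstar := by
  rw [CCC, pCov_const_add_dotProduct_right hX hY, pVar_const_add_dotProduct hX, ← hSigXY,
    ← hSigXX, hγ] at heq
  obtain ⟨hβ, hmean⟩ := hPD.eq_smul_inv_mulVec_of_div_eq hne hvar heq
  rw [pMean_const_add_dotProduct (fun j => (hX j).integrable one_le_two), ← hμX, ← hμY] at hmean
  rw [← hβstar] at hβ
  refine ⟨?_, hβ⟩
  rw [hαstar, ← hβ]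
  linarith

/-- Uniqueness of the maximum agreement linear predictor: any linear
predictor attaining the maximal concordance correlation `γ` must be the MALP. -/
theorem malp_unique {Ω : Type*} [MeasureSpace Ω]
    [IsProbabilityMeasure (ℙ : Measure Ω)] {p : ℕ} (hp : 0 < p)
    (X : Ω → Fin p → ℝ) (Y : Ω → ℝ)
    (hX : ∀ j, MemLp (fun ω => X ω j) 2 ℙ) (hY : MemLp Y 2 ℙ)
    (hvar : 0 < pVar Y)
    (μX : Fin p → ℝ) (hμX : μX = fun j => pMean (fun ω => X ω j))
    (μY : ℝ) (hμY : μY = pMean Y)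
    (SigXX : Matrix (Fin p) (Fin p) ℝ)
    (hSigXX : SigXX = Matrix.of fun j l => pCov (fun ω => X ω j) (fun ω => X ω l))
    (hPD : SigXX.PosDef)
    (SigXY : Fin p → ℝ) (hSigXY : SigXY = fun j => pCov (fun ω => X ω j) Y)
    (hne : SigXY ≠ 0)
    (γ : ℝ) (hγ : γ = Real.sqrt (SigXY ⬝ᵥ (SigXX⁻¹ *ᵥ SigXY)) / Real.sqrt (pVar Y))
    (βstar : Fin p → ℝ)
    (hβstar : βstar = (Real.sqrt (pVar Y) / Real.sqrt (SigXY ⬝ᵥ (SigXX⁻¹ *ᵥ SigXY))) •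
      (SigXX⁻¹ *ᵥ SigXY))
    (αstar : ℝ) (hαstar : αstar = μY - μX ⬝ᵥ βstar)
    (α : ℝ) (β : Fin p → ℝ)
    (heq : CCC Y (fun ω => α + X ω ⬝ᵥ β) = γ) :
    α = αstar ∧ β = βstar :=
  malp_unique_general X Y hX hY hvar μX hμX μY hμY SigXX hSigXX hPD SigXY hSigXY hne γ hγ βstar
    hβstar αstar hαstar α β heq
end

section
/- Let X be a p-dimensional random row vector and Y a square-integrable real random variable with positive variance, with Σ_XX positive definite and Σ_XY ≠ 0, γ = √(Σ_YX Σ_XX⁻¹ Σ_XY)/σ_Y, and let Ỹ*(x) = μ_Y + (x−μ_X)·(1/γ)Σ_XX⁻¹Σ_XY be the maximum agreement linear predictor. Then the Pearson correlation coefficient between Y and Ỹ*(X) equals γ, and hence CCC(Y, Ỹ*(X)) = ρ(Y, Ỹ*(X)) = γ. -/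
open MeasureTheory ProbabilityTheory Matrix

/-- Pearson correlation coefficient of two real random variables. -/
noncomputable def pPCC {Ω : Type*} [MeasureSpace Ω] (U V : Ω → ℝ) : ℝ :=
  pCov U V / (Real.sqrt (pVar U) * Real.sqrt (pVar V))

/-! With `c = γ⁻¹ Σ_XX⁻¹ Σ_XY` and `q = Σ_YX Σ_XX⁻¹ Σ_XY = γ² σ_Y²`, the predictor
`μ_Y + (X - μ_X) ⬝ᵥ c` has mean `μ_Y`, variance `c ⬝ᵥ Σ_XX c = γ⁻² q = σ_Y²` and covariance
`Σ_XY ⬝ᵥ c = γ⁻¹ q = γ σ_Y²` with `Y`, so `ρ = γ`. Having the mean and variance of `Y`, it also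
has CCC equal to `ρ`: the denominator `σ_Y² + σ_Y² + 0` is then `2 σ_Y σ_Y`. -/

section Moments

variable {Ω : Type*} [MeasureSpace Ω]

lemma pVar_nonneg (U : Ω → ℝ) : 0 ≤ pVar U :=
  integral_nonneg fun _ => mul_self_nonneg _

lemma CCC_eq_pPCC_of_pMean_eq_of_pVar_eq {U V : Ω → ℝ} (hmean : pMean U = pMean V)
    (hvar : pVar U = pVar V) : CCC U V = pPCC U V := by
  rw [CCC, pPCC, hmean, ← hvar, sub_self, Real.mul_self_sqrt (pVar_nonneg U)]
  ring

variable [IsProbabilityMeasure (ℙ : Measure Ω)] {ι : Type*} [Fintype ι]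

lemma integrable_sub_pMean_mul_sub_pMean {U V : Ω → ℝ} (hU : MemLp U 2 ℙ) (hV : MemLp V 2 ℙ) :
    Integrable (fun ω => (U ω - pMean U) * (V ω - pMean V)) :=
  ((hU.sub (memLp_const _)).integrable_mul (hV.sub (memLp_const _)) :)

lemma integral_sub_pMean {U : Ω → ℝ} (hU : Integrable U) : ∫ ω, (U ω - pMean U) = 0 := by
  rw [integral_sub hU (integrable_const _), integral_const, probReal_univ, one_smul, pMean,
    sub_self]

lemma pMean_add_dotProduct_sub_pMean {X : Ω → ι → ℝ} (hX : ∀ j, Integrable fun ω => X ω j)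
    (a : ℝ) (c : ι → ℝ) :
    pMean (fun ω => a + (X ω - fun j => pMean fun ω => X ω j) ⬝ᵥ c) = a := by
  have hterm (j : ι) : Integrable fun ω => (X ω j - pMean fun ω => X ω j) * c j :=
    ((hX j).sub (integrable_const _)).mul_const (c j)
  simp only [dotProduct, Pi.sub_apply]
  rw [pMean, integral_add (integrable_const a) (integrable_finsetSum _ fun j _ => hterm j),
    integral_finsetSum _ fun j _ => hterm j]
  simp only [integral_mul_const, integral_sub_pMean (hX _), zero_mul, Finset.sum_const_zero,
    add_zero, integral_const, probReal_univ, one_smul]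

lemma pCov_add_dotProduct_sub_pMean {U : Ω → ℝ} {X : Ω → ι → ℝ} (hU : MemLp U 2 ℙ)
    (hX : ∀ j, MemLp (fun ω => X ω j) 2 ℙ) (a : ℝ) (c : ι → ℝ) :
    pCov U (fun ω => a + (X ω - fun j => pMean fun ω => X ω j) ⬝ᵥ c) =
      (fun j => pCov U fun ω => X ω j) ⬝ᵥ c := by
  rw [pCov, pMean_add_dotProduct_sub_pMean (fun j => (hX j).integrable one_le_two)]
  simp only [add_sub_cancel_left, dotProduct, Pi.sub_apply, Finset.mul_sum, ← mul_assoc]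
  rw [integral_finsetSum _ fun j _ => (integrable_sub_pMean_mul_sub_pMean hU (hX j)).mul_const _]
  simp only [integral_mul_const, pCov]

lemma memLp_add_dotProduct {X : Ω → ι → ℝ} (hX : ∀ j, MemLp (fun ω => X ω j) 2 ℙ)
    (a : ℝ) (m c : ι → ℝ) : MemLp (fun ω => a + (X ω - m) ⬝ᵥ c) 2 ℙ := by
  simp only [dotProduct, Pi.sub_apply]
  exact (memLp_const a).add
    (memLp_finsetSum Finset.univ fun j _ => ((hX j).sub (memLp_const (m j))).mul_const (c j))

lemma pVar_add_dotProduct_sub_pMean {X : Ω → ι → ℝ} (hX : ∀ j, MemLp (fun ω => X ω j) 2 ℙ)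
    (a : ℝ) (c : ι → ℝ) :
    pVar (fun ω => a + (X ω - fun j => pMean fun ω => X ω j) ⬝ᵥ c) =
      c ⬝ᵥ (Matrix.of (fun j l => pCov (fun ω => X ω j) (fun ω => X ω l)) *ᵥ c) := by
  rw [pVar, pCov_add_dotProduct_sub_pMean (memLp_add_dotProduct hX _ _ _) hX, dotProduct_comm]
  congr 1
  ext j
  rw [pCov_comm, pCov_add_dotProduct_sub_pMean (hX j) hX]
  rfl

end Moments

lemma smul_inv_mulVec_dotProduct_mulVec {n : Type*} [Fintype n] [DecidableEq n]
    {S : Matrix n n ℝ} (hS : IsUnit S) (t : ℝ) (s : n → ℝ) :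
    (t • (S⁻¹ *ᵥ s)) ⬝ᵥ (S *ᵥ (t • (S⁻¹ *ᵥ s))) = t ^ 2 * (s ⬝ᵥ (S⁻¹ *ᵥ s)) := by
  rw [mulVec_smul, mulVec_mulVec, mul_nonsing_inv _ ((isUnit_iff_isUnit_det S).mp hS),
    one_mulVec, smul_dotProduct, dotProduct_smul, dotProduct_comm, smul_eq_mul, smul_eq_mul]
  ring

theorem malp_correlations_eq_gamma_general {Ω : Type*} [MeasureSpace Ω]
    [IsProbabilityMeasure (ℙ : Measure Ω)] {p : ℕ}
    (X : Ω → Fin p → ℝ) (Y : Ω → ℝ)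
    (hX : ∀ j, MemLp (fun ω => X ω j) 2 ℙ) (hY : MemLp Y 2 ℙ)
    (hvar : 0 < pVar Y)
    (μX : Fin p → ℝ) (hμX : μX = fun j => pMean (fun ω => X ω j))
    (μY : ℝ) (hμY : μY = pMean Y)
    (SigXX : Matrix (Fin p) (Fin p) ℝ)
    (hSigXX : SigXX = Matrix.of fun j l => pCov (fun ω => X ω j) (fun ω => X ω l))
    (hPD : SigXX.PosDef)
    (SigXY : Fin p → ℝ) (hSigXY : SigXY = fun j => pCov (fun ω => X ω j) Y)
    (hne : SigXY ≠ 0)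
    (γ : ℝ) (hγ : γ = Real.sqrt (SigXY ⬝ᵥ (SigXX⁻¹ *ᵥ SigXY)) / Real.sqrt (pVar Y)) :
    pPCC Y (fun ω => μY + (X ω - μX) ⬝ᵥ (γ⁻¹ • (SigXX⁻¹ *ᵥ SigXY))) = γ ∧
    CCC Y (fun ω => μY + (X ω - μX) ⬝ᵥ (γ⁻¹ • (SigXX⁻¹ *ᵥ SigXY))) = γ := by
  have hq : 0 < SigXY ⬝ᵥ (SigXX⁻¹ *ᵥ SigXY) := by simpa using hPD.inv.dotProduct_mulVec_pos hne
  have hγ_pos : 0 < γ := hγ ▸ div_pos (Real.sqrt_pos.2 hq) (Real.sqrt_pos.2 hvar)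
  have hγ_sq : γ ^ 2 * pVar Y = SigXY ⬝ᵥ (SigXX⁻¹ *ᵥ SigXY) := by
    rw [hγ, div_pow, Real.sq_sqrt hq.le, Real.sq_sqrt hvar.le, div_mul_cancel₀ _ hvar.ne']
  have hSigYX : (fun j => pCov Y fun ω => X ω j) = SigXY := by
    simp only [hSigXY, pCov_comm Y]
  subst hμX hμY
  set c := γ⁻¹ • (SigXX⁻¹ *ᵥ SigXY)
  set W : Ω → ℝ := fun ω => pMean Y + (X ω - fun j => pMean fun ω => X ω j) ⬝ᵥ c
  have hW_mean : pMean W = pMean Y :=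
    pMean_add_dotProduct_sub_pMean (fun j => (hX j).integrable one_le_two) _ c
  have hW_var : pVar W = pVar Y := by
    rw [pVar_add_dotProduct_sub_pMean hX, ← hSigXX, smul_inv_mulVec_dotProduct_mulVec hPD.isUnit,
      inv_pow, ← hγ_sq, inv_mul_cancel_left₀ (pow_ne_zero 2 hγ_pos.ne')]
  have hW_cov : pCov Y W = γ * pVar Y := by
    rw [pCov_add_dotProduct_sub_pMean hY hX, hSigYX, dotProduct_smul, smul_eq_mul, ← hγ_sq]
    field_simp
  have hPCC : pPCC Y W = γ := by
    rw [pPCC, hW_cov, hW_var, Real.mul_self_sqrt hvar.le]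
    field_simp
  exact ⟨hPCC, (CCC_eq_pPCC_of_pMean_eq_of_pVar_eq hW_mean.symm hW_var.symm).trans hPCC⟩

/-- The Pearson correlation between `Y` and the MALP
`Ỹ*(x) = μ_Y + (x−μ_X)·(1/γ)Σ_XX⁻¹Σ_XY` equals `γ`, and the concordance correlation
between `Y` and the MALP also equals `γ` (hence equals the Pearson correlation). -/
theorem malp_correlations_eq_gamma {Ω : Type*} [MeasureSpace Ω]
    [IsProbabilityMeasure (ℙ : Measure Ω)] {p : ℕ} (hp : 0 < p)
    (X : Ω → Fin p → ℝ) (Y : Ω → ℝ)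
    (hX : ∀ j, MemLp (fun ω => X ω j) 2 ℙ) (hY : MemLp Y 2 ℙ)
    (hvar : 0 < pVar Y)
    (μX : Fin p → ℝ) (hμX : μX = fun j => pMean (fun ω => X ω j))
    (μY : ℝ) (hμY : μY = pMean Y)
    (SigXX : Matrix (Fin p) (Fin p) ℝ)
    (hSigXX : SigXX = Matrix.of fun j l => pCov (fun ω => X ω j) (fun ω => X ω l))
    (hPD : SigXX.PosDef)
    (SigXY : Fin p → ℝ) (hSigXY : SigXY = fun j => pCov (fun ω => X ω j) Y)
    (hne : SigXY ≠ 0)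
    (γ : ℝ) (hγ : γ = Real.sqrt (SigXY ⬝ᵥ (SigXX⁻¹ *ᵥ SigXY)) / Real.sqrt (pVar Y)) :
    pPCC Y (fun ω => μY + (X ω - μX) ⬝ᵥ (γ⁻¹ • (SigXX⁻¹ *ᵥ SigXY))) = γ ∧
    CCC Y (fun ω => μY + (X ω - μX) ⬝ᵥ (γ⁻¹ • (SigXX⁻¹ *ᵥ SigXY))) = γ :=
  malp_correlations_eq_gamma_general X Y hX hY hvar μX hμX μY hμY SigXX hSigXX hPD SigXY hSigXY hne
    γ hγ
end
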